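/- Let q_1,...,q_n > 0 and ℓ ∈ {1,...,n-1}. With h_{s,j} = Σ_{t ⊆ [n], |t| = ℓ, j ∉ t} (1/|(s ∪ {j}) \ t|) · Π_{a ∈ t} q_a and g_k(q) the degree-k elementary symmetric polynomial of q, the Markov transition defined by moving from a size-ℓ set s to s ∪ {j} (for j ∉ s) with probability q_j · h_{s,j} / g_{ℓ+1}(q) maps the distribution μ_ℓ on size-ℓ subsets given by μ_ℓ(s) = (Π_{a∈s} q_a)/g_ℓ(q) to the distribution μ_{ℓ+1} on size-(ℓ+1) subsets given by μ_{ℓ+1}(s') = (Π_{a∈s'} q_a)/g_{ℓ+1}(q). That is: (i) for every size-ℓ set s, Σ_{j ∉ s} q_j h_{s,j}/g_{ℓ+1}(q) = 1, and (ii) for every size-(ℓ+1) set s', Σ_{j ∈ s'} μ_ℓ(s' \ {j}) · q_j h_{s' \ {j}, j}/g_{ℓ+1}(q) = μ_{ℓ+1}(s'). -/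

import Mathlib

open Finset

/-- The elementary symmetric polynomial `g_k(q) = ∑_{|t|=k} ∏_{j∈t} q_j`. -/
def gpoly {n : ℕ} (q : Fin n → ℝ) (k : ℕ) : ℝ :=
  ∑ t ∈ Finset.univ.filter (fun t : Finset (Fin n) => t.card = k), ∏ a ∈ t, q a

/-- For `|s| = ℓ` and `j ∉ s`, the quantity
`h_{s,j} = ∑_{|t|=ℓ, j∉t} (1/|(s ∪ {j}) \ t|) ∏_{a ∈ t} q_a`. -/
noncomputable def hWeight {n : ℕ} (q : Fin n → ℝ) (ℓ : ℕ) (s : Finset (Fin n)) (j : Fin n) : ℝ :=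
  ∑ t ∈ Finset.univ.filter (fun t : Finset (Fin n) => t.card = ℓ ∧ j ∉ t),
    (1 / (((insert j s) \ t).card : ℝ)) * ∏ a ∈ t, q a

/-- The distribution `μ_k` on size-`k` subsets: `μ_k(s) = (∏_{a∈s} q_a) / g_k(q)`. -/
noncomputable def muDist {n : ℕ} (q : Fin n → ℝ) (k : ℕ) (s : Finset (Fin n)) : ℝ :=
  (∏ a ∈ s, q a) / gpoly q k

/-!
Both parts are double counting. Since `|s| = |t|`, `|(s ∪ {j}) \ t| = |(t ∪ {j}) \ s|`, so with
`u = t ∪ {j}` the sum `∑_{j ∉ s} q_j h_{s,j}` runs over the pairs `(u, j)` with `|u| = ℓ + 1` and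
`j ∈ u \ s`, weighted by `(∏_{a ∈ u} q_a) / |u \ s|`; summing over `j` first leaves `g_{ℓ+1}(q)`.
In the same way `∑_{j ∈ s'} h_{s' \ {j}, j} = g_ℓ(q)`, which gives (ii) because
`μ_ℓ(s' \ {j}) q_j = (∏_{a ∈ s'} q_a) / g_ℓ(q)` does not depend on `j`.
-/

lemma Finset.sum_one_div_card_mul {α : Type*} {A : Finset α} (hA : A.Nonempty) (x : ℝ) :
    ∑ _j ∈ A, 1 / (#A : ℝ) * x = x := by
  have : (#A : ℝ) ≠ 0 := by exact_mod_cast hA.card_pos.ne'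
  rw [sum_const, nsmul_eq_mul]
  field_simp

section

variable {α : Type*} [DecidableEq α]

lemma Finset.card_insert_sdiff_comm {s t : Finset α} {j : α} (hs : j ∉ s) (ht : j ∉ t)
    (hst : #s = #t) : #(insert j s \ t) = #(insert j t \ s) := by
  rw [insert_sdiff_of_notMem _ ht, insert_sdiff_of_notMem _ hs,
    card_insert_of_notMem (fun h => hs (mem_sdiff.mp h).1),
    card_insert_of_notMem (fun h => ht (mem_sdiff.mp h).1), card_sdiff_comm hst]

lemma Finset.sum_filter_card_notMem_insert [Fintype α] {β : Type*} [AddCommMonoid β]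
    (j : α) (k : ℕ) (f : Finset α → β) :
    ∑ t ∈ univ.filter (fun t : Finset α => #t = k ∧ j ∉ t), f (insert j t) =
      ∑ u ∈ univ.filter (fun u : Finset α => #u = k + 1 ∧ j ∈ u), f u := by
  refine sum_nbij' (insert j) (fun u => u.erase j) ?_ ?_ ?_ ?_ (fun _ _ => rfl) <;>
    simp only [mem_filter, mem_univ, true_and, and_imp]
  · exact fun t hk hj => ⟨by rw [card_insert_of_notMem hj, hk], mem_insert_self j t⟩
  · exact fun u hk hj => ⟨by rw [card_erase_of_mem hj, hk, Nat.add_sub_cancel], notMem_erase j u⟩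
  · exact fun t _ hj => erase_insert hj
  · exact fun u _ hj => insert_erase hj

end

lemma gpoly_pos {n : ℕ} {q : Fin n → ℝ} (hq : ∀ j, 0 < q j) {k : ℕ} (hk : k ≤ n) :
    0 < gpoly q k := by
  obtain ⟨t, -, ht⟩ := exists_subset_card_eq (s := (univ : Finset (Fin n))) (by simpa using hk)
  exact sum_pos (fun t _ => prod_pos fun a _ => hq a) ⟨t, by simp [ht]⟩

lemma sum_compl_mul_hWeight {n ℓ : ℕ} (q : Fin n → ℝ) {s : Finset (Fin n)} (hs : #s = ℓ) :
    ∑ j ∈ sᶜ, q j * hWeight q ℓ s j = gpoly q (ℓ + 1) := by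
  set f : Finset (Fin n) → ℝ := fun u => 1 / (#(u \ s) : ℝ) * ∏ a ∈ u, q a
  have hterm : ∀ j ∈ sᶜ, q j * hWeight q ℓ s j =
      ∑ u ∈ univ.filter (fun u : Finset (Fin n) => #u = ℓ + 1 ∧ j ∈ u), f u := by
    intro j hj
    rw [hWeight, mul_sum, ← sum_filter_card_notMem_insert]
    refine sum_congr rfl fun t ht => ?_
    simp only [mem_filter, mem_univ, true_and] at ht
    simp only [f]
    rw [card_insert_sdiff_comm (mem_compl.mp hj) ht.2 (hs.trans ht.1.symm), prod_insert ht.2]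
    ring
  calc ∑ j ∈ sᶜ, q j * hWeight q ℓ s j
      = ∑ u ∈ univ.filter (fun u : Finset (Fin n) => #u = ℓ + 1), ∑ _j ∈ u \ s, f u := by
        rw [sum_congr rfl hterm]
        exact sum_comm' fun j u => by simp only [mem_filter, mem_univ, mem_compl, mem_sdiff]; tauto
    _ = gpoly q (ℓ + 1) := by
        refine sum_congr rfl fun u hu => sum_one_div_card_mul ?_ _
        exact sdiff_nonempty_of_card_lt_card (by rw [hs, (mem_filter.mp hu).2]; omega)

lemma sum_hWeight_erase {n ℓ : ℕ} (q : Fin n → ℝ) {s : Finset (Fin n)} (hs : #s = ℓ + 1) :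
    ∑ j ∈ s, hWeight q ℓ (s.erase j) j = gpoly q ℓ := by
  calc ∑ j ∈ s, hWeight q ℓ (s.erase j) j
      = ∑ j ∈ s, ∑ t ∈ univ.filter (fun t : Finset (Fin n) => #t = ℓ ∧ j ∉ t),
          1 / (#(s \ t) : ℝ) * ∏ a ∈ t, q a :=
        sum_congr rfl fun j hj => by rw [hWeight, insert_erase hj]
    _ = ∑ t ∈ univ.filter (fun t : Finset (Fin n) => #t = ℓ), ∑ _j ∈ s \ t,
          1 / (#(s \ t) : ℝ) * ∏ a ∈ t, q a :=
        sum_comm' fun j t => by simp only [mem_filter, mem_univ, mem_sdiff]; tauto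
    _ = gpoly q ℓ := by
        refine sum_congr rfl fun t ht => sum_one_div_card_mul ?_ _
        exact sdiff_nonempty_of_card_lt_card (by rw [hs, (mem_filter.mp ht).2]; omega)

theorem markov_transition_maps_mu_general (n ℓ : ℕ) (hℓn : ℓ + 1 ≤ n)
    (q : Fin n → ℝ) (hq : ∀ j, 0 < q j) :
    (∀ s : Finset (Fin n), s.card = ℓ →
      ∑ j ∈ sᶜ, q j * hWeight q ℓ s j / gpoly q (ℓ + 1) = 1) ∧
    (∀ s' : Finset (Fin n), s'.card = ℓ + 1 →
      ∑ j ∈ s', muDist q ℓ (s'.erase j) * (q j * hWeight q ℓ (s'.erase j) j / gpoly q (ℓ + 1))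
        = muDist q (ℓ + 1) s') := by
  have hg : gpoly q (ℓ + 1) ≠ 0 := (gpoly_pos hq hℓn).ne'
  have hg' : gpoly q ℓ ≠ 0 := (gpoly_pos hq (by omega)).ne'
  refine ⟨fun s hs => ?_, fun s hs => ?_⟩
  · rw [← sum_div, sum_compl_mul_hWeight q hs, div_self hg]
  · have hterm : ∀ j ∈ s,
        muDist q ℓ (s.erase j) * (q j * hWeight q ℓ (s.erase j) j / gpoly q (ℓ + 1)) =
          muDist q ℓ s / gpoly q (ℓ + 1) * hWeight q ℓ (s.erase j) j := by
      intro j hj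
      rw [muDist, muDist, ← mul_prod_erase s q hj]
      ring
    rw [sum_congr rfl hterm, ← mul_sum, sum_hWeight_erase q hs, muDist, muDist]
    field_simp

/-- The Markov transition `s ↦ s ∪ {j}` (for `j ∉ s`) with probability
`q_j h_{s,j} / g_{ℓ+1}(q)` is a well-defined transition kernel mapping
`μ_ℓ` to `μ_{ℓ+1}`:
(i) for every size-`ℓ` set `s`, `∑_{j∉s} q_j h_{s,j} / g_{ℓ+1}(q) = 1`;
(ii) for every size-`(ℓ+1)` set `s'`,
`∑_{j∈s'} μ_ℓ(s' \ {j}) q_j h_{s'\{j},j} / g_{ℓ+1}(q) = μ_{ℓ+1}(s')`. -/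
theorem markov_transition_maps_mu (n ℓ : ℕ) (hℓ : 1 ≤ ℓ) (hℓn : ℓ + 1 ≤ n)
    (q : Fin n → ℝ) (hq : ∀ j, 0 < q j) :
    (∀ s : Finset (Fin n), s.card = ℓ →
      ∑ j ∈ sᶜ, q j * hWeight q ℓ s j / gpoly q (ℓ + 1) = 1) ∧
    (∀ s' : Finset (Fin n), s'.card = ℓ + 1 →
      ∑ j ∈ s', muDist q ℓ (s'.erase j) * (q j * hWeight q ℓ (s'.erase j) j / gpoly q (ℓ + 1))
        = muDist q (ℓ + 1) s') :=
  markov_transition_maps_mu_general n ℓ hℓn q hq
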